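/- arXiv:2409.01811 — 3 statements merged into one kernel-verified Lean document; each statement's English description precedes it below -/
import Mathlib

section
/- With τ = F S₂ Fᵀ, D = F⁻ᵀ Ė F⁻¹, and C = FᵀF, one has ⟨(D^{ZJ}/Dt)[τ], D⟩ = ⟨Ṡ₂, Ė⟩ + 2 tr(C⁻¹ Ė S₂ Ė). -/
open Matrix

private theorem triple_deriv (F S : ℝ → Matrix (Fin 3) (Fin 3) ℝ) (t : ℝ)
    (Fd Sd : Matrix (Fin 3) (Fin 3) ℝ)
    (hF : ∀ i j, HasDerivAt (fun s => F s i j) (Fd i j) t)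
    (hS : ∀ i j, HasDerivAt (fun s => S s i j) (Sd i j) t) (i j : Fin 3) :
    HasDerivAt (fun s => (F s * S s * (F s)ᵀ) i j)
      ((Fd * S t * (F t)ᵀ + F t * Sd * (F t)ᵀ + F t * S t * Fdᵀ) i j) t := by
  have h : ∀ s, (F s * S s * (F s)ᵀ) i j = ∑ l, ∑ k, F s i k * S s k l * F s j l := by
    intro s
    simp [Matrix.mul_apply, Finset.sum_mul, transpose_apply]
  simp only [h]
  have key : HasDerivAt (fun s => ∑ l, ∑ k, F s i k * S s k l * F s j l)
      (∑ l, ∑ k, (Fd i k * S t k l * F t j l + F t i k * Sd k l * F t j l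
        + F t i k * S t k l * Fd j l)) t := by
    apply HasDerivAt.fun_sum; intro l _
    apply HasDerivAt.fun_sum; intro k _
    have h2 := ((hF i k).fun_mul (hS k l)).fun_mul (hF j l)
    convert h2 using 1; rfl; ring
  convert key using 1
  simp only [Matrix.add_apply, Matrix.mul_apply, transpose_apply, Finset.sum_mul,
    Finset.sum_add_distrib]

private theorem key_alg (A B P Q Ai : Matrix (Fin 3) (Fin 3) ℝ) (h1 : A * Ai = 1)
    (h2 : Ai * A = 1) (hP : Pᵀ = P) :
    trace ((B*P*Aᵀ + A*Q*Aᵀ + A*P*Bᵀ + (A*P*Aᵀ)*(((1:ℝ)/2) • (B*Ai - (B*Ai)ᵀ))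
        - (((1:ℝ)/2) • (B*Ai - (B*Ai)ᵀ))*(A*P*Aᵀ)) * (((1:ℝ)/2) • (B*Ai + (B*Ai)ᵀ))ᵀ)
    = trace (Q * (((1:ℝ)/2) • (Bᵀ*A + Aᵀ*B))ᵀ)
      + 2 * trace ((Ai*Aiᵀ) * (((1:ℝ)/2) • (Bᵀ*A + Aᵀ*B)) * P * (((1:ℝ)/2) • (Bᵀ*A + Aᵀ*B))) := by
  have h1t : Aᵀ * Aiᵀ = 1 := by rw [← transpose_mul, h2, transpose_one]
  have h2t : Aiᵀ * Aᵀ = 1 := by rw [← transpose_mul, h1, transpose_one]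
  have r1 : ∀ X : Matrix (Fin 3) (Fin 3) ℝ, A * (Ai * X) = X := by
    intro X; rw [← Matrix.mul_assoc, h1, Matrix.one_mul]
  have r2 : ∀ X : Matrix (Fin 3) (Fin 3) ℝ, Ai * (A * X) = X := by
    intro X; rw [← Matrix.mul_assoc, h2, Matrix.one_mul]
  have r3 : ∀ X : Matrix (Fin 3) (Fin 3) ℝ, Aᵀ * (Aiᵀ * X) = X := by
    intro X; rw [← Matrix.mul_assoc, h1t, Matrix.one_mul]
  have r4 : ∀ X : Matrix (Fin 3) (Fin 3) ℝ, Aiᵀ * (Aᵀ * X) = X := by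
    intro X; rw [← Matrix.mul_assoc, h2t, Matrix.one_mul]
  simp only [transpose_smul, transpose_add, transpose_sub, transpose_mul, transpose_transpose,
    hP, Matrix.smul_mul, Matrix.mul_smul, mul_add, add_mul, sub_mul, mul_sub,
    trace_add, trace_sub, trace_smul, smul_eq_mul, Matrix.mul_assoc,
    r1, r2, r3, r4, h1, h2, h1t, h2t, Matrix.mul_one, Matrix.one_mul]
  have Hc : trace (A*(Q*Bᵀ)) = trace (Q*(Bᵀ*A)) := by
    rw [trace_mul_comm]; simp only [Matrix.mul_assoc]
  have Hd : trace (A*(Q*(Aᵀ*(B*Ai)))) = trace (Q*(Aᵀ*B)) := by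
    rw [trace_mul_comm]
    simp only [Matrix.mul_assoc, h2, Matrix.mul_one]
  have He : trace (A*(P*(Bᵀ*(Aiᵀ*Bᵀ)))) = trace (B*(P*(Aᵀ*(B*Ai)))) := by
    rw [← trace_transpose]
    simp only [transpose_mul, transpose_transpose, hP, Matrix.mul_assoc]
    rw [trace_mul_comm]; simp only [Matrix.mul_assoc]
    rw [trace_mul_comm]; simp only [Matrix.mul_assoc]
  have Hf : trace (A*(P*(Bᵀ*(B*Ai)))) = trace (B*(P*Bᵀ)) := by
    rw [trace_mul_comm]
    simp only [Matrix.mul_assoc, h2, Matrix.mul_one]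
    rw [← trace_transpose]
    simp only [transpose_mul, transpose_transpose, hP, Matrix.mul_assoc]
    rw [trace_mul_comm]; simp only [Matrix.mul_assoc]
  have Hg : trace (A*(P*(Aᵀ*(B*(Ai*(Aiᵀ*Bᵀ))))))
      = trace (Ai*(Aiᵀ*(Bᵀ*(A*(P*(Aᵀ*B)))))) := by
    rw [trace_mul_comm]; simp only [Matrix.mul_assoc]
    rw [trace_mul_comm]; simp only [Matrix.mul_assoc]
    rw [trace_mul_comm]; simp only [Matrix.mul_assoc]
    rw [trace_mul_comm]; simp only [Matrix.mul_assoc]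
  have Hh : trace (A*(P*(Aᵀ*(B*(Ai*(B*Ai)))))) = trace (B*(P*(Aᵀ*(B*Ai)))) := by
    rw [← trace_transpose]
    simp only [transpose_mul, transpose_transpose, hP, Matrix.mul_assoc]
    rw [trace_mul_comm]
    simp only [Matrix.mul_assoc, h1t, Matrix.mul_one]
    rw [← trace_transpose]
    simp only [transpose_mul, transpose_transpose, hP, Matrix.mul_assoc]
    rw [trace_mul_comm]; simp only [Matrix.mul_assoc]
    rw [trace_mul_comm]; simp only [Matrix.mul_assoc]
    rw [trace_mul_comm]; simp only [Matrix.mul_assoc]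
    rw [trace_mul_comm]; simp only [Matrix.mul_assoc]
  have Hi : trace (Aiᵀ*(Bᵀ*(A*(P*Bᵀ)))) = trace (B*(P*(Aᵀ*(B*Ai)))) := by
    rw [← trace_transpose]
    simp only [transpose_mul, transpose_transpose, hP, Matrix.mul_assoc]
  have Hj : trace (Aiᵀ*(Bᵀ*(A*(P*(Aᵀ*(B*Ai))))))
      = trace (Ai*(Aiᵀ*(Bᵀ*(A*(P*(Aᵀ*B)))))) := by
    rw [trace_mul_comm]; simp only [Matrix.mul_assoc]
    rw [trace_mul_comm]; simp only [Matrix.mul_assoc]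
    rw [trace_mul_comm]; simp only [Matrix.mul_assoc]
    rw [trace_mul_comm]; simp only [Matrix.mul_assoc]
    rw [trace_mul_comm]; simp only [Matrix.mul_assoc]
    rw [trace_mul_comm]; simp only [Matrix.mul_assoc]
  have Hk : trace (Ai*(Aiᵀ*(Bᵀ*(A*(P*(Bᵀ*A)))))) = trace (B*(P*(Aᵀ*(B*Ai)))) := by
    rw [← trace_transpose]
    simp only [transpose_mul, transpose_transpose, hP, Matrix.mul_assoc]
    rw [trace_mul_comm]
    simp only [Matrix.mul_assoc, h2t, Matrix.mul_one]
  have Hm : trace (Ai*(B*(P*(Bᵀ*A)))) = trace (B*(P*Bᵀ)) := by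
    rw [trace_mul_comm]
    simp only [Matrix.mul_assoc, h1, Matrix.mul_one]
  have Hp : trace (Ai*(B*(P*(Aᵀ*B)))) = trace (B*(P*(Aᵀ*(B*Ai)))) := by
    rw [trace_mul_comm]; simp only [Matrix.mul_assoc]
  rw [Hc, Hd, He, Hf, Hg, Hh, Hi, Hj, Hk, Hm, Hp]
  ring

/-- With `τ = F S₂ Fᵀ`, `C = FᵀF`, `Ė = (1/2)(Ḟᵀ F + Fᵀ Ḟ)` and `D = sym(Ḟ F⁻¹)`,
one has `⟨(D^ZJ/Dt)[τ], D⟩ = ⟨Ṡ₂, Ė⟩ + 2 tr(C⁻¹ Ė S₂ Ė)`, where `⟨X,Y⟩ = tr(X Yᵀ)`. -/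
theorem ZJ_rate_kirchhoff_quadratic_form
    (F Fdot S Sdot : ℝ → Matrix (Fin 3) (Fin 3) ℝ) (t : ℝ)
    (τdot L D W Edot C : Matrix (Fin 3) (Fin 3) ℝ)
    (hF : ∀ (i j : Fin 3), HasDerivAt (fun s => F s i j) (Fdot t i j) t)
    (hS : ∀ (i j : Fin 3), HasDerivAt (fun s => S s i j) (Sdot t i j) t)
    (hSsym : ∀ s, (S s).IsSymm)
    (hdet : 0 < (F t).det)
    (hτ : ∀ (i j : Fin 3), HasDerivAt (fun s => (F s * S s * (F s)ᵀ) i j) (τdot i j) t)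
    (hL : L = Fdot t * (F t)⁻¹)
    (hD : D = ((1 : ℝ)/2) • (L + Lᵀ))
    (hW : W = ((1 : ℝ)/2) • (L - Lᵀ))
    (hEdot : Edot = ((1 : ℝ)/2) • ((Fdot t)ᵀ * F t + (F t)ᵀ * Fdot t))
    (hC : C = (F t)ᵀ * F t) :
    Matrix.trace
        ((τdot + (F t * S t * (F t)ᵀ) * W - W * (F t * S t * (F t)ᵀ)) * Dᵀ)
      = Matrix.trace (Sdot t * Edotᵀ)
        + 2 * Matrix.trace (C⁻¹ * Edot * S t * Edot) := by
  have hU : IsUnit (F t).det := isUnit_iff_ne_zero.mpr (ne_of_gt hdet)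
  have h1 : F t * (F t)⁻¹ = 1 := Matrix.mul_nonsing_inv _ hU
  have h2 : (F t)⁻¹ * F t = 1 := Matrix.nonsing_inv_mul _ hU
  have hP : (S t)ᵀ = S t := hSsym t
  have hτd : τdot = Fdot t * S t * (F t)ᵀ + F t * Sdot t * (F t)ᵀ + F t * S t * (Fdot t)ᵀ := by
    ext i j
    exact (hτ i j).unique (triple_deriv F S t (Fdot t) (Sdot t) hF hS i j)
  have hCinv : C⁻¹ = (F t)⁻¹ * ((F t)⁻¹)ᵀ := by
    rw [hC]
    apply Matrix.inv_eq_right_inv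
    rw [Matrix.mul_assoc, ← Matrix.mul_assoc (F t), h1, Matrix.one_mul,
      ← transpose_mul, h2, transpose_one]
  rw [hτd, hCinv, hD, hW, hEdot, hL]
  exact key_alg (F t) (Fdot t) (S t) (Sdot t) ((F t)⁻¹) h1 h2 hP
end

section
/- For the Cauchy stress σ = J⁻¹ F S₂ Fᵀ along a differentiable motion, J⟨(D^{ZJ}/Dt)[σ], D⟩ = ⟨Ṡ₂, Ė⟩ + 2 tr(C⁻¹ Ė S₂ Ė) - ⟨C⁻¹, Ė⟩⟨S₂, Ė⟩. -/
open Matrix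

private lemma hasDerivAt_matrix_mul {n : Type*} [Fintype n]
    {f g : ℝ → Matrix n n ℝ} {A B : Matrix n n ℝ} {t : ℝ}
    (hf : ∀ i j, HasDerivAt (fun s => f s i j) (A i j) t)
    (hg : ∀ i j, HasDerivAt (fun s => g s i j) (B i j) t) (i j : n) :
    HasDerivAt (fun s => (f s * g s) i j) ((A * g t + f t * B) i j) t := by
  simp only [Matrix.mul_apply, Matrix.add_apply]
  have h := HasDerivAt.fun_sum (fun k (_ : k ∈ Finset.univ) => (hf i k).mul (hg k j))
  refine h.congr_deriv ?_
  rw [Finset.sum_add_distrib]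

private lemma hasDerivAt_det3 {f : ℝ → Matrix (Fin 3) (Fin 3) ℝ}
    {A : Matrix (Fin 3) (Fin 3) ℝ} {t : ℝ}
    (hf : ∀ i j, HasDerivAt (fun s => f s i j) (A i j) t) :
    HasDerivAt (fun s => (f s).det) (Matrix.trace ((f t).adjugate * A)) t := by
  simp only [Matrix.det_fin_three]
  have h :=
    (((((((hf 0 0).mul (hf 1 1)).mul (hf 2 2)).sub
      (((hf 0 0).mul (hf 1 2)).mul (hf 2 1))).sub
      (((hf 0 1).mul (hf 1 0)).mul (hf 2 2))).add
      (((hf 0 1).mul (hf 1 2)).mul (hf 2 0))).add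
      (((hf 0 2).mul (hf 1 0)).mul (hf 2 1))).sub
      (((hf 0 2).mul (hf 1 1)).mul (hf 2 0))
  refine h.congr_deriv ?_
  simp [Matrix.trace_fin_three, Matrix.mul_apply, Fin.sum_univ_three,
    Matrix.adjugate_fin_three, Matrix.vecMul, dotProduct]
  ring

/-- For the Cauchy stress `σ = J⁻¹ F S₂ Fᵀ`,
`J ⟨(D^ZJ/Dt)[σ], D⟩ = ⟨Ṡ₂, Ė⟩ + 2 tr(C⁻¹ Ė S₂ Ė) - ⟨C⁻¹, Ė⟩⟨S₂, Ė⟩`,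
where `⟨X,Y⟩ = tr(X Yᵀ)`, `D = sym(Ḟ F⁻¹)`, `W = skew(Ḟ F⁻¹)`. -/
theorem ZJ_rate_cauchy_quadratic_form
    (F Fdot S Sdot : ℝ → Matrix (Fin 3) (Fin 3) ℝ) (t : ℝ)
    (σdot L D W Edot C σ : Matrix (Fin 3) (Fin 3) ℝ)
    (hF : ∀ (i j : Fin 3), HasDerivAt (fun s => F s i j) (Fdot t i j) t)
    (hS : ∀ (i j : Fin 3), HasDerivAt (fun s => S s i j) (Sdot t i j) t)
    (hSsym : ∀ s, (S s).IsSymm)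
    (hdet : 0 < (F t).det)
    (hσ : ∀ (i j : Fin 3),
      HasDerivAt (fun s => (((F s).det)⁻¹ • (F s * S s * (F s)ᵀ)) i j) (σdot i j) t)
    (hσdef : σ = ((F t).det)⁻¹ • (F t * S t * (F t)ᵀ))
    (hL : L = Fdot t * (F t)⁻¹)
    (hD : D = ((1 : ℝ)/2) • (L + Lᵀ))
    (hW : W = ((1 : ℝ)/2) • (L - Lᵀ))
    (hEdot : Edot = ((1 : ℝ)/2) • ((Fdot t)ᵀ * F t + (F t)ᵀ * Fdot t))
    (hC : C = (F t)ᵀ * F t) :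
    (F t).det * Matrix.trace ((σdot + σ * W - W * σ) * Dᵀ)
      = Matrix.trace (Sdot t * Edotᵀ)
        + 2 * Matrix.trace (C⁻¹ * Edot * S t * Edot)
        - Matrix.trace (C⁻¹ * Edotᵀ) * Matrix.trace (S t * Edotᵀ) := by
  set A := F t with hA
  set B := Fdot t with hB
  set S0 := S t with hS0
  set Sd := Sdot t with hSd
  set J := A.det with hJdef
  have hJ : J ≠ 0 := ne_of_gt hdet
  have hU : IsUnit A.det := isUnit_iff_ne_zero.mpr hJ
  have hUT : IsUnit (Aᵀ).det := by rwa [Matrix.det_transpose]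
  have hAA : A * A⁻¹ = 1 := Matrix.mul_nonsing_inv A hU
  have hA'A : A⁻¹ * A = 1 := Matrix.nonsing_inv_mul A hU
  -- transpose entries derivative
  have hFT : ∀ i j, HasDerivAt (fun s => (F s)ᵀ i j) (Bᵀ i j) t := by
    intro i j; simpa only [Matrix.transpose_apply] using hF j i
  -- derivative of F*S*Fᵀ
  set Pd := B * S0 * Aᵀ + A * Sd * Aᵀ + A * S0 * Bᵀ with hPd
  set P := A * S0 * Aᵀ with hPdef
  have hPder : ∀ i j, HasDerivAt (fun s => (F s * S s * (F s)ᵀ) i j) (Pd i j) t := by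
    intro i j
    have h1 : ∀ i j, HasDerivAt (fun s => (F s * S s) i j) ((B * S0 + A * Sd) i j) t :=
      fun i j => hasDerivAt_matrix_mul hF hS i j
    have h2 := hasDerivAt_matrix_mul h1 hFT i j
    convert h2 using 2
    rw [hPd]
    simp only [Matrix.add_mul]
    rfl
  -- derivative of det
  set Jd := Matrix.trace (A.adjugate * B) with hJdd
  have hdet' : HasDerivAt (fun s => (F s).det) Jd t := hasDerivAt_det3 hF
  -- explicit σdot via uniqueness
  set c : ℝ := -Jd / J ^ 2 with hc
  have hσd : σdot = c • P + J⁻¹ • Pd := by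
    ext i j
    refine (hσ i j).unique ?_
    have hinv : HasDerivAt (fun s => ((F s).det)⁻¹) c t := hdet'.inv hJ
    have h2 := hinv.mul (hPder i j)
    simp only [Matrix.smul_apply, smul_eq_mul, Matrix.add_apply]
    exact h2
  -- adjugate = J • A⁻¹
  have hadj : A.adjugate = J • A⁻¹ := by
    calc A.adjugate = (A⁻¹ * A) * A.adjugate := by rw [hA'A, Matrix.one_mul]
      _ = A⁻¹ * (A * A.adjugate) := by rw [mul_assoc]
      _ = A⁻¹ * (A.det • (1 : Matrix (Fin 3) (Fin 3) ℝ)) := by rw [Matrix.mul_adjugate]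
      _ = J • A⁻¹ := by rw [mul_smul_comm, mul_one, hJdef]
  have hJdval : Jd = J * Matrix.trace (A⁻¹ * B) := by
    rw [hJdd, hadj, Matrix.smul_mul, Matrix.trace_smul, smul_eq_mul]
  -- J-scaled quantities
  have hJc : J * c = -Matrix.trace (A⁻¹ * B) := by
    have key0 : ∀ x : ℝ, J * (-(J * x) / J ^ 2) = -x := by
      intro x; field_simp
    rw [hc, hJdval]; exact key0 _
  have hJσdot : J • σdot = (-Matrix.trace (A⁻¹ * B)) • P + Pd := by
    rw [hσd, smul_add, smul_smul, smul_smul, mul_inv_cancel₀ hJ, one_smul, hJc]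
  have hJσ : J • σ = P := by
    rw [hσdef, smul_smul, mul_inv_cancel₀ hJ, one_smul]
  -- symmetry facts
  have hST : S0ᵀ = S0 := hSsym t
  have hDT : Dᵀ = D := by
    rw [hD]
    simp [Matrix.transpose_smul, Matrix.transpose_add, Matrix.transpose_transpose, add_comm]
  have hWT : Wᵀ = -W := by
    rw [hW]
    simp only [Matrix.transpose_smul, Matrix.transpose_sub, Matrix.transpose_transpose]
    rw [← smul_neg, neg_sub]
  have hET : Edotᵀ = Edot := by
    rw [hEdot]
    simp [Matrix.transpose_smul, Matrix.transpose_add, Matrix.transpose_mul,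
      Matrix.transpose_transpose, add_comm]
  have hPT : Pᵀ = P := by
    rw [hPdef]
    simp [Matrix.transpose_mul, Matrix.transpose_transpose, hST, mul_assoc]
  -- key algebraic identities
  have hEd : Aᵀ * D * A = Edot := by
    rw [hD, hEdot, hL, mul_smul_comm, Matrix.smul_mul]
    congr 1
    simp only [Matrix.mul_add, Matrix.add_mul, Matrix.transpose_mul,
      Matrix.transpose_nonsing_inv, mul_assoc, hA'A, mul_one]
    rw [Matrix.mul_nonsing_inv_cancel_left Aᵀ (Bᵀ * A) hUT]
    exact add_comm _ _
  have hCinv : C⁻¹ = A⁻¹ * Aᵀ⁻¹ := by rw [hC, Matrix.mul_inv_rev]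
  have hCE : C⁻¹ * Edot = A⁻¹ * D * A := by
    rw [hCinv, ← hEd]
    simp only [mul_assoc]
    rw [Matrix.nonsing_inv_mul_cancel_left Aᵀ (D * A) hUT]
  have hBLA : B = L * A := by
    rw [hL, Matrix.nonsing_inv_mul_cancel_right A B hU]
  have hDWL : D + W = L := by
    rw [hD, hW, ← smul_add,
      show L + Lᵀ + (L - Lᵀ) = (2 : ℝ) • L from by rw [two_smul]; abel, smul_smul]
    norm_num
  -- trace identities
  have key : ∀ X : Matrix (Fin 3) (Fin 3) ℝ,
      Matrix.trace (A * X * Aᵀ * D) = Matrix.trace (X * Edot) := by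
    intro X
    calc Matrix.trace (A * X * Aᵀ * D) = Matrix.trace (D * (A * X) * Aᵀ) :=
          Matrix.trace_mul_cycle (A * X) Aᵀ D
      _ = Matrix.trace (Aᵀ * D * (A * X)) := Matrix.trace_mul_cycle D (A * X) Aᵀ
      _ = Matrix.trace (Aᵀ * D * A * X) := by rw [← mul_assoc]
      _ = Matrix.trace (Edot * X) := by rw [hEd]
      _ = Matrix.trace (X * Edot) := Matrix.trace_mul_comm _ _
  have e1 : Matrix.trace (A⁻¹ * B) = Matrix.trace D := by
    rw [hD, Matrix.trace_smul, Matrix.trace_add, Matrix.trace_transpose, hL,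
      Matrix.trace_mul_comm]
    simp only [smul_eq_mul]
    ring
  have e2 : Matrix.trace (P * D) = Matrix.trace (S0 * Edot) := by
    rw [hPdef]; exact key S0
  have e3 : Matrix.trace (A * Sd * Aᵀ * D) = Matrix.trace (Sd * Edot) := key Sd
  have e4 : Matrix.trace (B * S0 * Aᵀ * D) = Matrix.trace (P * (D * L)) := by
    rw [hBLA]
    calc Matrix.trace (L * A * S0 * Aᵀ * D) = Matrix.trace (L * (A * S0 * Aᵀ * D)) := by
          simp only [mul_assoc]
      _ = Matrix.trace ((A * S0 * Aᵀ * D) * L) := Matrix.trace_mul_comm _ _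
      _ = Matrix.trace (P * (D * L)) := by rw [hPdef]; simp only [mul_assoc]
  have e5 : Matrix.trace (A * S0 * Bᵀ * D) = Matrix.trace (P * (D * L)) := by
    have hBT : Bᵀ = Aᵀ * Lᵀ := by rw [hBLA, Matrix.transpose_mul]
    rw [hBT]
    calc Matrix.trace (A * S0 * (Aᵀ * Lᵀ) * D) = Matrix.trace (P * Lᵀ * D) := by
          rw [hPdef]; simp only [mul_assoc]
      _ = Matrix.trace ((P * Lᵀ * D)ᵀ) := (Matrix.trace_transpose _).symm
      _ = Matrix.trace (Dᵀ * (Lᵀᵀ * Pᵀ)) := by simp only [Matrix.transpose_mul, mul_assoc]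
      _ = Matrix.trace (D * (L * P)) := by rw [hDT, Matrix.transpose_transpose, hPT]
      _ = Matrix.trace (D * L * P) := by rw [← mul_assoc]
      _ = Matrix.trace (P * (D * L)) := by
          rw [Matrix.trace_mul_comm (D * L) P, ← mul_assoc]
  have e6 : Matrix.trace (P * (D * L)) =
      Matrix.trace (P * (D * D)) + Matrix.trace (P * (D * W)) := by
    rw [← hDWL, Matrix.mul_add, Matrix.mul_add, Matrix.trace_add]
  have e7a : Matrix.trace (W * P * D) = Matrix.trace (P * (D * W)) := by
    calc Matrix.trace (W * P * D) = Matrix.trace (D * W * P) :=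
          Matrix.trace_mul_cycle W P D
      _ = Matrix.trace (P * (D * W)) := Matrix.trace_mul_comm (D * W) P
  have e7b : Matrix.trace (P * W * D) = -Matrix.trace (P * (D * W)) := by
    calc Matrix.trace (P * W * D) = Matrix.trace ((P * W * D)ᵀ) :=
          (Matrix.trace_transpose _).symm
      _ = Matrix.trace (Dᵀ * (Wᵀ * Pᵀ)) := by simp only [Matrix.transpose_mul, mul_assoc]
      _ = Matrix.trace (D * (-W * P)) := by rw [hDT, hWT, hPT]
      _ = -Matrix.trace (D * (W * P)) := by rw [Matrix.neg_mul, Matrix.mul_neg,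
            Matrix.trace_neg]
      _ = -Matrix.trace (W * P * D) := by rw [Matrix.trace_mul_comm D (W * P), mul_assoc]
      _ = -Matrix.trace (P * (D * W)) := by rw [e7a]
  have e8 : Matrix.trace (C⁻¹ * Edot * S0 * Edot) = Matrix.trace (P * (D * D)) := by
    rw [hCE, ← hEd]
    calc Matrix.trace (A⁻¹ * D * A * S0 * (Aᵀ * D * A))
        = Matrix.trace (A⁻¹ * (D * (A * (S0 * (Aᵀ * (D * A)))))) := by simp only [mul_assoc]
      _ = Matrix.trace ((D * (A * (S0 * (Aᵀ * (D * A))))) * A⁻¹) := Matrix.trace_mul_comm _ _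
      _ = Matrix.trace (D * (A * (S0 * (Aᵀ * (D * (A * A⁻¹)))))) := by simp only [mul_assoc]
      _ = Matrix.trace (D * (A * (S0 * (Aᵀ * D)))) := by rw [hAA, Matrix.mul_one]
      _ = Matrix.trace ((A * (S0 * (Aᵀ * D))) * D) := Matrix.trace_mul_comm _ _
      _ = Matrix.trace (P * (D * D)) := by rw [hPdef]; simp only [mul_assoc]
  have e9 : Matrix.trace (C⁻¹ * Edotᵀ) = Matrix.trace D := by
    rw [hET, hCE, Matrix.trace_mul_comm (A⁻¹ * D) A, ← mul_assoc, hAA, Matrix.one_mul]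
  -- final assembly
  rw [hDT]
  have step1 : J * Matrix.trace ((σdot + σ * W - W * σ) * D)
      = Matrix.trace (((-Matrix.trace (A⁻¹ * B)) • P + Pd + P * W - W * P) * D) := by
    rw [← hJσdot, ← hJσ]
    rw [show J • σdot + (J • σ) * W - W * (J • σ)
        = J • (σdot + σ * W - W * σ) from by
      rw [smul_sub, smul_add, smul_mul_assoc, mul_smul_comm]]
    rw [Matrix.smul_mul, Matrix.trace_smul, smul_eq_mul]
  rw [step1]
  simp only [Matrix.sub_mul, Matrix.add_mul, Matrix.trace_sub, Matrix.trace_add,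
    smul_mul_assoc, Matrix.trace_smul, smul_eq_mul, hPd]
  rw [e1, e2, e3, e4, e5, e6, e7a, e7b, e8, e9, hET]
  ring
end

section
/- If σ̂ : Sym(3) → Sym(3) is strictly Hilbert-monotone in log V (i.e., ⟨σ̂(log V₁) - σ̂(log V₂), log V₁ - log V₂⟩ > 0 for all V₁ ≠ V₂ ∈ Sym⁺⁺(3)) and σ(V) = σ̂(log V) is an isotropic tensor function, then the Baker-Ericksen inequalities hold: for distinct eigenvalues λᵢ ≠ λⱼ of V with corresponding principal stresses σᵢ, σⱼ, one has (σᵢ - σⱼ)(λᵢ - λⱼ) > 0. -/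
/-!
Conjugating `V = diag λ` by a rotation that exchanges the `i`-th and `j`-th axes produces
`V' = diag (λ ∘ swap i j)`, and isotropy says that the stress at `V'` is the stress at `V` with the
same two axes exchanged. Hence in the monotonicity inequality for the pair `V, V'` only the
`i`-th and `j`-th diagonal entries survive, and it reads
`2 (σᵢ - σⱼ)(log λᵢ - log λⱼ) > 0`. Since `log` is strictly increasing, this is the
Baker-Ericksen inequality.
-/

open Matrix

section Swap

variable {n R : Type*} [Fintype n] [DecidableEq n] [CommRing R]

lemma Matrix.neg_swap_mul_mul_transpose (i j : n) (M : Matrix n n R) :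
    -swap R i j * M * (-swap R i j)ᵀ = M.submatrix (Equiv.swap i j) (Equiv.swap i j) := by
  rw [transpose_neg, transpose_swap, neg_mul, neg_mul_neg, swap, PEquiv.toMatrix_toPEquiv_mul,
    PEquiv.mul_toMatrix_toPEquiv, Equiv.symm_swap]
  rfl

lemma Matrix.transpose_neg_swap_mul_neg_swap (i j : n) : (-swap R i j)ᵀ * -swap R i j = 1 := by
  rw [transpose_neg, transpose_swap, neg_mul_neg, swap_mul_self]

lemma Matrix.det_neg_swap (hn : Odd (Fintype.card n)) {i j : n} (hij : i ≠ j) :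
    (-swap R i j).det = 1 := by
  rw [det_neg, swap, det_permutation, Equiv.Perm.sign_swap hij, hn.neg_one_pow]
  simp

lemma Matrix.trace_sub_submatrix_swap_mul_diagonal {i j : n} (hij : i ≠ j) (S : Matrix n n R)
    (f : n → R) :
    trace ((S - S.submatrix (Equiv.swap i j) (Equiv.swap i j)) *
        (diagonal f - diagonal (f ∘ Equiv.swap i j))ᵀ) =
      2 * ((S i i - S j j) * (f i - f j)) := by
  rw [diagonal_sub, diagonal_transpose, trace, Fintype.sum_eq_add i j hij]
  · simp only [diag_apply, mul_diagonal, sub_apply, submatrix_apply, Function.comp_apply,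
      Equiv.swap_apply_left, Equiv.swap_apply_right]
    ring
  · rintro a ⟨hai, haj⟩
    simp [mul_diagonal, Equiv.swap_apply_of_ne_of_ne hai haj]

end Swap

lemma mul_sub_pos_iff_mul_log_sub_pos {a x y : ℝ} (hx : 0 < x) (hy : 0 < y) :
    0 < a * (Real.log x - Real.log y) ↔ 0 < a * (x - y) := by
  rw [mul_pos_iff, mul_pos_iff, sub_pos, sub_neg, sub_pos, sub_neg, Real.log_lt_log_iff hy hx,
    Real.log_lt_log_iff hx hy]

lemma apply_diagonal_eq_diagonal_log {n : Type*} [Fintype n] [DecidableEq n]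
    {mlog : Matrix n n ℝ → Matrix n n ℝ}
    (hmlog : ∀ (V : Matrix n n ℝ) (u : n → (n → ℝ)) (μ : n → ℝ),
      (∀ j k, u j ⬝ᵥ u k = if j = k then 1 else 0) → (∀ i, 0 < μ i) →
      V = ∑ i, μ i • vecMulVec (u i) (u i) →
      mlog V = ∑ i, Real.log (μ i) • vecMulVec (u i) (u i))
    {μ : n → ℝ} (hμ : ∀ i, 0 < μ i) :
    mlog (diagonal μ) = diagonal (Real.log ∘ μ) := by
  have hsum (c : n → ℝ) :
      ∑ i, c i • vecMulVec (Pi.single i 1) (Pi.single i 1) = diagonal c := by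
    simp_rw [← single_eq_single_vecMulVec_single, smul_single, smul_eq_mul, mul_one,
      sum_single_eq_diagonal]
  refine (hmlog _ (fun i => Pi.single i 1) μ (fun j k => ?_) hμ (hsum μ).symm).trans (hsum _)
  simp [dotProduct_single, Pi.single_apply, eq_comm]

/-- If `σ̂` is strictly Hilbert-monotone in `log V` and `V ↦ σ̂(log V)` is isotropic, then
the Baker-Ericksen inequalities hold: `(σᵢ - σⱼ)(λᵢ - λⱼ) > 0` for distinct eigenvalues. -/
theorem monotone_log_implies_baker_ericksen
    (mlog : Matrix (Fin 3) (Fin 3) ℝ → Matrix (Fin 3) (Fin 3) ℝ)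
    (hmlog : ∀ (V : Matrix (Fin 3) (Fin 3) ℝ) (u : Fin 3 → (Fin 3 → ℝ)) (μ : Fin 3 → ℝ),
      (∀ j k, u j ⬝ᵥ u k = if j = k then 1 else 0) → (∀ i, 0 < μ i) →
      V = ∑ i, μ i • Matrix.vecMulVec (u i) (u i) →
      mlog V = ∑ i, Real.log (μ i) • Matrix.vecMulVec (u i) (u i))
    (σh : Matrix (Fin 3) (Fin 3) ℝ → Matrix (Fin 3) (Fin 3) ℝ)
    (hmono : ∀ V₁ V₂ : Matrix (Fin 3) (Fin 3) ℝ, V₁.PosDef → V₂.PosDef → V₁ ≠ V₂ →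
      0 < Matrix.trace ((σh (mlog V₁) - σh (mlog V₂)) * (mlog V₁ - mlog V₂)ᵀ))
    (hiso : ∀ V : Matrix (Fin 3) (Fin 3) ℝ, V.PosDef →
      ∀ Q : Matrix (Fin 3) (Fin 3) ℝ, Qᵀ * Q = 1 → Q.det = 1 →
      σh (mlog (Q * V * Qᵀ)) = Q * σh (mlog V) * Qᵀ)
    (lam : Fin 3 → ℝ) (hlam : ∀ i, 0 < lam i) (i j : Fin 3) (hij : lam i ≠ lam j) :
    0 < (σh (mlog (Matrix.diagonal lam)) i i - σh (mlog (Matrix.diagonal lam)) j j)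
        * (lam i - lam j) := by
  have hne : i ≠ j := fun h => hij (congrArg lam h)
  set τ := Equiv.swap i j
  have hlamτ : ∀ a, 0 < (lam ∘ τ) a := fun a => hlam (τ a)
  have hpd := posDef_diagonal_iff.2 hlam
  -- the swap matrix is a reflection; its negative is a rotation because the dimension is odd
  have hσ : σh (mlog (diagonal (lam ∘ τ))) = (σh (mlog (diagonal lam))).submatrix τ τ := by
    rw [← submatrix_diagonal_equiv, ← neg_swap_mul_mul_transpose, hiso _ hpd _
      (transpose_neg_swap_mul_neg_swap i j) (det_neg_swap (by decide) hne),
      neg_swap_mul_mul_transpose]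
  have hdiag : diagonal lam ≠ diagonal (lam ∘ τ) := fun h =>
    hij (by simpa [τ] using congrFun (congrFun h i) i)
  have key := hmono _ _ hpd (posDef_diagonal_iff.2 hlamτ) hdiag
  generalize σh (mlog (diagonal lam)) = S at hσ key ⊢
  rw [hσ, apply_diagonal_eq_diagonal_log hmlog hlam, apply_diagonal_eq_diagonal_log hmlog hlamτ,
    ← Function.comp_assoc, trace_sub_submatrix_swap_mul_diagonal hne] at key
  rw [← mul_sub_pos_iff_mul_log_sub_pos (hlam i) (hlam j)]
  exact (mul_pos_iff_of_pos_left two_pos).1 key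
end
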